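/- arXiv:2008.01793 — 7 statements merged into one kernel-verified Lean document; each statement's English description precedes it below -/
import Mathlib

section
/- Let n and C be natural numbers with n > 1 and C > 1, let F be a field, and let x, y ∈ GL_n(F) satisfy x⁻¹ y x = y^C. Then y^((C^n)!) is unipotent, i.e. y^((C^n)!) − 1 is a nilpotent matrix. -/
/-!
Pass to an algebraic closure. Since `y` is conjugate to `y ^ C`, its spectrum is stable under
`μ ↦ μ ^ C`; it has at most `n` elements, so by pigeonhole `μ ^ C ^ a = μ ^ C ^ b` for some
`a < b ≤ n`. Hence the order of `μ` divides `C ^ b - C ^ a ≤ C ^ n`, and so divides `(C ^ n)!`.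
Thus `y ^ (C ^ n)!` has `1` as its only eigenvalue, and `y ^ (C ^ n)! - 1` is nilpotent.
-/

open Polynomial
open scoped Nat

lemma pow_factorial_eq_one_of_pow_pow_eq {M₀ : Type*} [MonoidWithZero M₀]
    [IsLeftCancelMulZero M₀] {g : M₀} (hg : g ≠ 0) {C a b n : ℕ} (hC : 1 < C) (hab : a < b)
    (hbn : b ≤ n) (h : g ^ C ^ a = g ^ C ^ b) : g ^ (C ^ n)! = 1 := by
  have hlt : C ^ a < C ^ b := Nat.pow_lt_pow_right hC hab
  have hperiod : g ^ (C ^ b - C ^ a) = 1 := by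
    refine mul_left_cancel₀ (pow_ne_zero (C ^ a) hg) ?_
    rw [← pow_add, Nat.add_sub_cancel' hlt.le, h, mul_one]
  obtain ⟨k, hk⟩ : C ^ b - C ^ a ∣ (C ^ n)! :=
    Nat.dvd_factorial (Nat.sub_pos_of_lt hlt)
      ((Nat.sub_le _ _).trans (Nat.pow_le_pow_right (by omega) hbn))
  rw [hk, pow_mul, hperiod, one_pow]

lemma pow_factorial_eq_one_of_forall_pow_pow_mem {M₀ : Type*} [MonoidWithZero M₀]
    [IsLeftCancelMulZero M₀] {g : M₀} (hg : g ≠ 0) {C n : ℕ} (hC : 1 < C) {s : Finset M₀}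
    (hs : s.card ≤ n) (hmem : ∀ k, g ^ C ^ k ∈ s) : g ^ (C ^ n)! = 1 := by
  have hcard : s.card < (Finset.range (n + 1)).card := by simpa [Nat.lt_succ_iff] using hs
  obtain ⟨a, ha, b, hb, hab, heq⟩ :=
    Finset.exists_ne_map_eq_of_card_lt_of_maps_to hcard fun k _ => hmem k
  rw [Finset.mem_range] at ha hb
  rcases hab.lt_or_gt with hlt | hlt
  · exact pow_factorial_eq_one_of_pow_pow_eq hg hC hlt (by omega) heq
  · exact pow_factorial_eq_one_of_pow_pow_eq hg hC hlt (by omega) heq.symm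

lemma spectrum.pow_mem_of_inv_mul_mul_eq_pow {𝕜 A : Type*} [Field 𝕜] [Ring A] [Algebra 𝕜 A]
    {u v : Aˣ} {C : ℕ} (h : u⁻¹ * v * u = v ^ C) {μ : 𝕜} (hμ : μ ∈ spectrum 𝕜 (v : A)) :
    μ ^ C ∈ spectrum 𝕜 (v : A) := by
  have hv : (v : A) ^ C = ↑u⁻¹ * v * u := by
    rw [← Units.val_pow_eq_pow_val, ← h]
    push_cast
    rfl
  simpa [hv] using spectrum.pow_mem_pow (v : A) C hμ

namespace Matrix

variable {K m : Type*} [Field K] [Fintype m] [DecidableEq m]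

lemma card_roots_toFinset_charpoly_le [DecidableEq K] (A : Matrix m m K) :
    A.charpoly.roots.toFinset.card ≤ Fintype.card m :=
  calc A.charpoly.roots.toFinset.card ≤ Multiset.card A.charpoly.roots :=
        Multiset.toFinset_card_le _
    _ ≤ A.charpoly.natDegree := card_roots' _
    _ = Fintype.card m := A.charpoly_natDegree_eq_dim

lemma isNilpotent_sub_algebraMap_of_spectrum_subset [IsAlgClosed K] (B : Matrix m m K) {μ : K}
    (hB : spectrum K B ⊆ {μ}) : IsNilpotent (B - algebraMap K (Matrix m m K) μ) := by
  have hsplits : B.charpoly.Splits := IsAlgClosed.splits _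
  have hroots : B.charpoly.roots = Multiset.replicate (Fintype.card m) μ := by
    rw [Multiset.eq_replicate, ← B.charpoly_natDegree_eq_dim, hsplits.natDegree_eq_card_roots]
    exact ⟨rfl, fun ν hν => hB (B.mem_spectrum_iff_isRoot_charpoly.2 (isRoot_of_mem_roots hν))⟩
  have hcharpoly : B.charpoly = (X - C μ) ^ Fintype.card m := by
    rw [hsplits.eq_prod_roots_of_monic B.charpoly_monic, hroots]
    simp
  refine ⟨Fintype.card m, ?_⟩
  simpa [hcharpoly] using B.aeval_self_charpoly

lemma pow_factorial_eq_one_of_mem_spectrum {u v : GL m K} {C : ℕ} (hC : 1 < C)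
    (h : u⁻¹ * v * u = v ^ C) {μ : K} (hμ : μ ∈ spectrum K (v : Matrix m m K)) :
    μ ^ (C ^ Fintype.card m)! = 1 := by
  classical
  have hμ0 : μ ≠ 0 := fun h0 => spectrum.zero_notMem K v.isUnit (h0 ▸ hμ)
  have horbit : ∀ k, μ ^ C ^ k ∈ spectrum K (v : Matrix m m K) := by
    intro k
    induction k with
    | zero => simpa using hμ
    | succ k ih =>
      simpa only [pow_succ, pow_mul] using spectrum.pow_mem_of_inv_mul_mul_eq_pow h ih
  refine pow_factorial_eq_one_of_forall_pow_pow_mem hμ0 hC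
    (card_roots_toFinset_charpoly_le (v : Matrix m m K)) fun k => ?_
  rw [Multiset.mem_toFinset, mem_roots (charpoly_monic _).ne_zero,
    ← mem_spectrum_iff_isRoot_charpoly]
  exact horbit k

end Matrix

theorem gln_conj_pow_unipotent_general (n C : ℕ) (hC : 1 < C)
    (F : Type*) [Field F] (x y : GL (Fin n) F)
    (h : x⁻¹ * y * x = y ^ C) :
    IsNilpotent (((y ^ Nat.factorial (C ^ n) : GL (Fin n) F) : Matrix (Fin n) (Fin n) F) - 1) := by
  let K := AlgebraicClosure F
  let f := algebraMap F K
  let toK := Matrix.GeneralLinearGroup.map (n := Fin n) f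
  let Y := toK y
  have hY : (toK x)⁻¹ * Y * toK x = Y ^ C := by
    simpa only [map_mul, map_inv, map_pow] using congrArg toK h
  have hspec : spectrum K ((Y : Matrix (Fin n) (Fin n) K) ^ (C ^ n)!) ⊆ {1} := by
    rw [spectrum.map_pow_of_pos _ (Nat.factorial_pos _)]
    rintro _ ⟨μ, hμ, rfl⟩
    simpa using Matrix.pow_factorial_eq_one_of_mem_spectrum hC hY hμ
  have hnil := Matrix.isNilpotent_sub_algebraMap_of_spectrum_subset _ hspec
  rw [map_one] at hnil
  rw [← IsNilpotent.map_iff (f := f.mapMatrix) (Matrix.map_injective f.injective)]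
  simpa [Y, toK, Matrix.map_sub, Matrix.map_pow] using hnil

/-- If `x, y ∈ GL_n(F)` satisfy `x⁻¹ y x = y ^ C` with `n, C > 1`, then
`y ^ (C ^ n)!` is unipotent, i.e. `y ^ (C ^ n)! - 1` is nilpotent. -/
theorem gln_conj_pow_unipotent (n C : ℕ) (hn : 1 < n) (hC : 1 < C)
    (F : Type*) [Field F] (x y : GL (Fin n) F)
    (h : x⁻¹ * y * x = y ^ C) :
    IsNilpotent (((y ^ Nat.factorial (C ^ n) : GL (Fin n) F) : Matrix (Fin n) (Fin n) F) - 1) :=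
  gln_conj_pow_unipotent_general n C hC F x y h
end

section
/- Let G be a group and let L, M be normal subgroups of G. Let Φ ⊆ G be a symmetric generating subset of G (i.e. Φ⁻¹ = Φ and Φ generates G) which contains the identity and which projects onto G/L and onto G/M (the image of Φ in each quotient is the whole quotient). If the restrictions to Φ² of the quotient maps G → G/L and G → G/M have the same fibers, i.e. for all a, b ∈ Φ² one has aL = bL if and only if aM = bM, then L = M. -/
open scoped Pointwise

/-- If a symmetric generating set `Φ ∋ 1` surjects onto `G/L` and `G/M`, and the quotient
maps have the same fibers on `Φ²`, then `L = M`. -/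
theorem normal_subgroups_eq_of_same_fibers (G : Type*) [Group G]
    (L M : Subgroup G) (hL : L.Normal) (hM : M.Normal)
    (Φ : Set G) (hsym : Φ⁻¹ = Φ) (hgen : Subgroup.closure Φ = ⊤) (hone : (1 : G) ∈ Φ)
    (hontoL : ∀ g : G, ∃ φ ∈ Φ, φ⁻¹ * g ∈ L)
    (hontoM : ∀ g : G, ∃ φ ∈ Φ, φ⁻¹ * g ∈ M)
    (hfib : ∀ a ∈ Φ * Φ, ∀ b ∈ Φ * Φ, (a⁻¹ * b ∈ L ↔ a⁻¹ * b ∈ M)) :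
    L = M := by
  have hmem : ∀ x ∈ Φ, x ∈ Φ * Φ := fun x hx => by
    simpa using Set.mul_mem_mul hx hone
  have key : ∀ g : G, ∀ φ ∈ Φ, (φ⁻¹ * g ∈ L ↔ φ⁻¹ * g ∈ M) := by
    intro g
    have hg : g ∈ Subgroup.closure Φ := hgen ▸ Subgroup.mem_top g
    induction hg using Subgroup.closure_induction with
    | mem x hx => intro φ hφ; exact hfib φ (hmem φ hφ) x (hmem x hx)
    | one => intro φ hφ; exact hfib φ (hmem φ hφ) 1 (hmem 1 hone)
    | mul x y hx hy ihx ihy =>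
      intro φ hφ
      obtain ⟨ψ, hψ, hψL⟩ := hontoL x
      have hψM : ψ⁻¹ * x ∈ M := (ihx ψ hψ).mp hψL
      obtain ⟨θ, hθ, hθL⟩ := hontoL y
      have hθM : θ⁻¹ * y ∈ M := (ihy θ hθ).mp hθL
      have hψθL : (ψ*θ)⁻¹ * (x*y) ∈ L := by
        have h := L.mul_mem (hL.conj_mem _ hψL θ⁻¹) hθL
        have e : θ⁻¹ * (ψ⁻¹ * x) * θ⁻¹⁻¹ * (θ⁻¹ * y) = (ψ*θ)⁻¹ * (x*y) := by group
        rwa [e] at h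
      have hψθM : (ψ*θ)⁻¹ * (x*y) ∈ M := by
        have h := M.mul_mem (hM.conj_mem _ hψM θ⁻¹) hθM
        have e : θ⁻¹ * (ψ⁻¹ * x) * θ⁻¹⁻¹ * (θ⁻¹ * y) = (ψ*θ)⁻¹ * (x*y) := by group
        rwa [e] at h
      constructor
      · intro h
        have h1 : φ⁻¹ * (ψ*θ) ∈ L := by
          have h' := L.mul_mem h (L.inv_mem hψθL)
          have e : φ⁻¹ * (x*y) * ((ψ*θ)⁻¹ * (x*y))⁻¹ = φ⁻¹ * (ψ*θ) := by group
          rwa [e] at h'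
        have h2 : φ⁻¹ * (ψ*θ) ∈ M :=
          (hfib φ (hmem φ hφ) (ψ*θ) (Set.mul_mem_mul hψ hθ)).mp h1
        have h' := M.mul_mem h2 hψθM
        have e : φ⁻¹ * (ψ*θ) * ((ψ*θ)⁻¹ * (x*y)) = φ⁻¹ * (x*y) := by group
        rwa [e] at h'
      · intro h
        have h1 : φ⁻¹ * (ψ*θ) ∈ M := by
          have h' := M.mul_mem h (M.inv_mem hψθM)
          have e : φ⁻¹ * (x*y) * ((ψ*θ)⁻¹ * (x*y))⁻¹ = φ⁻¹ * (ψ*θ) := by group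
          rwa [e] at h'
        have h2 : φ⁻¹ * (ψ*θ) ∈ L :=
          (hfib φ (hmem φ hφ) (ψ*θ) (Set.mul_mem_mul hψ hθ)).mpr h1
        have h' := L.mul_mem h2 hψθL
        have e : φ⁻¹ * (ψ*θ) * ((ψ*θ)⁻¹ * (x*y)) = φ⁻¹ * (x*y) := by group
        rwa [e] at h'
    | inv x hx ihx =>
      intro φ hφ
      have hφ' : φ⁻¹ ∈ Φ := by rw [← hsym]; simpa using hφ
      have step := ihx φ⁻¹ hφ'
      constructor
      · intro h
        have hL1 : φ⁻¹⁻¹ * x ∈ L := by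
          have h' := hL.conj_mem _ (L.inv_mem h) x⁻¹
          have e : x⁻¹ * (φ⁻¹ * x⁻¹)⁻¹ * x⁻¹⁻¹ = φ⁻¹⁻¹ * x := by group
          rwa [e] at h'
        have hM1 := step.mp hL1
        have h' := hM.conj_mem _ (M.inv_mem hM1) x
        have e : x * (φ⁻¹⁻¹ * x)⁻¹ * x⁻¹ = φ⁻¹ * x⁻¹ := by group
        rwa [e] at h'
      · intro h
        have hM1 : φ⁻¹⁻¹ * x ∈ M := by
          have h' := hM.conj_mem _ (M.inv_mem h) x⁻¹
          have e : x⁻¹ * (φ⁻¹ * x⁻¹)⁻¹ * x⁻¹⁻¹ = φ⁻¹⁻¹ * x := by group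
          rwa [e] at h'
        have hL1 := step.mpr hM1
        have h' := hL.conj_mem _ (L.inv_mem hL1) x
        have e : x * (φ⁻¹⁻¹ * x)⁻¹ * x⁻¹ = φ⁻¹ * x⁻¹ := by group
        rwa [e] at h'
  ext x
  simpa using key x 1 hone
end

section
/- Let G be a group acting on a set X, and let M ⊆ G be a symmetric, conjugation-invariant subset (M⁻¹ = M and gMg⁻¹ = M for every g ∈ G). Call a triple (b₁, b₂, b₃) ∈ X³ good if there exist b₄ ∈ X and σ, τ ∈ G such that σ·b₁ = b₁, σ·b₃ = b₄, τ·b₁ = b₂ and τ·b₃ = b₄. If a₁, a₂ ∈ X and there exist β, γ ∈ M such that the triple (a₁, β·a₂, γ·a₁) is good, then a₂ ∈ M³·a₁; that is, there exist m₁, m₂, m₃ ∈ M with (m₁m₂m₃)·a₁ = a₂. -/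
/-- If `M` is a symmetric conjugation-invariant subset of `G` acting on `X`, and there are
`β, γ ∈ M` such that the triple `(a₁, β·a₂, γ·a₁)` is good, then `a₂ ∈ M³·a₁`. -/
theorem mem_cube_smul_of_good_triple (G X : Type*) [Group G] [MulAction G X]
    (M : Set G) (hsym : M⁻¹ = M)
    (hconj : ∀ g : G, (fun m => g * m * g⁻¹) '' M = M)
    (a₁ a₂ : X) (β γ : G) (hβ : β ∈ M) (hγ : γ ∈ M)
    (hgood : ∃ (b₄ : X) (σ τ : G),
      σ • a₁ = a₁ ∧ σ • (γ • a₁) = b₄ ∧ τ • a₁ = β • a₂ ∧ τ • (γ • a₁) = b₄) :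
    ∃ m₁ ∈ M, ∃ m₂ ∈ M, ∃ m₃ ∈ M, (m₁ * m₂ * m₃) • a₁ = a₂ := by
  obtain ⟨b₄, σ, τ, h1, h2, h3, h4⟩ := hgood
  have hβinv : β⁻¹ ∈ M := by rw [← hsym]; exact Set.inv_mem_inv.mpr hβ
  have hγinv : γ⁻¹ ∈ M := by rw [← hsym]; exact Set.inv_mem_inv.mpr hγ
  refine ⟨β⁻¹, hβinv, τ * γ⁻¹ * τ⁻¹, ?_, σ * γ * σ⁻¹, ?_, ?_⟩
  · rw [← hconj τ]; exact ⟨γ⁻¹, hγinv, rfl⟩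
  · rw [← hconj σ]; exact ⟨γ, hγ, rfl⟩
  · have hσ : (σ * γ * σ⁻¹) • a₁ = b₄ := by
      rw [mul_smul, mul_smul, inv_smul_eq_iff.mpr h1.symm, h2]
    have hτ : (τ * γ⁻¹ * τ⁻¹) • b₄ = β • a₂ := by
      rw [mul_smul, mul_smul, ← h4, inv_smul_smul, inv_smul_smul, h3]
    rw [mul_smul, mul_smul, hσ, hτ, inv_smul_smul]
end

section
/- Let n ≥ 3 be an integer and A an infinite integral domain of finite Krull dimension whose Jacobson radical is trivial. Let 𝔮 ◁ A be a maximal ideal and let e₁, …, e_n be the standard basis of Aⁿ. Let β ∈ SL_n(A) be a matrix that is congruent to the elementary matrix e_{2,1} modulo 𝔮 (entrywise). Then there exists γ ∈ SL_n(A) which fixes the vectors e₁ and β·e₁ and is congruent to e_{1,3} modulo 𝔮. -/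
/-!
With `v = β e₁`, take `γ = e_{1,2}(-v₃) e_{1,3}(v₂)`. It acts by `w ↦ w + (v₂ w₃ - v₃ w₂) e₁`,
so it fixes `e₁` and `v`. Modulo `𝔮` we have `v ≡ e_{2,1} e₁ = e₁ + e₂`, i.e. `v₂ ≡ 1` and
`v₃ ≡ 0`, hence `γ ≡ e_{1,2}(0) e_{1,3}(1) = e_{1,3}`.
-/

/-- The elementary matrix `e_{i,j}(a) ∈ SL_n(A)`: ones on the diagonal, `a` in the `(i,j)`
entry (for `i ≠ j`), zeros elsewhere. -/
def elemSL {n : ℕ} {A : Type*} [CommRing A] (i j : Fin n) (hij : i ≠ j) (a : A) :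
    Matrix.SpecialLinearGroup (Fin n) A :=
  ⟨Matrix.transvection i j a, Matrix.det_transvection_of_ne i j hij a⟩

namespace Matrix

variable {n R : Type*} [CommRing R]

theorem forall_sub_mem_iff_map_eq {m : Type*} {I : Ideal R} {M N : Matrix m n R} :
    (∀ i j, M i j - N i j ∈ I) ↔ M.map (Ideal.Quotient.mk I) = N.map (Ideal.Quotient.mk I) := by
  simp [← Matrix.ext_iff, Ideal.Quotient.eq]

variable [DecidableEq n]

theorem transvection_mulVec [Fintype n] (i j : n) (c : R) (w : n → R) :
    transvection i j c *ᵥ w = w + Pi.single i (c * w j) := by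
  rw [transvection, add_mulVec, one_mulVec, single_mulVec]
  rfl

theorem transvection_mul_transvection_mulVec [Fintype n] {i j k : n} (hji : j ≠ i) (a b : R)
    (w : n → R) :
    (transvection i j a * transvection i k b) *ᵥ w = w + Pi.single i (a * w j + b * w k) := by
  rw [← mulVec_mulVec, transvection_mulVec, transvection_mulVec, Pi.add_apply,
    Pi.single_eq_of_ne hji, add_zero, add_assoc, ← Pi.single_add, add_comm (b * w k)]

theorem map_transvection {S : Type*} [CommRing S] (f : R →+* S) (i j : n) (c : R) :
    (transvection i j c).map f = transvection i j (f c) := by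
  simp [transvection, Matrix.map_add, map_single]

variable [Fintype n] {i j k : n}

theorem exists_fixing_single_congr_transvection (hji : j ≠ i) (hki : k ≠ i) (I : Ideal R)
    (v : n → R) (hvj : Ideal.Quotient.mk I (v j) = 1) (hvk : Ideal.Quotient.mk I (v k) = 0) :
    ∃ γ : SpecialLinearGroup n R, (γ : Matrix n n R) *ᵥ Pi.single i 1 = Pi.single i 1 ∧
      (γ : Matrix n n R) *ᵥ v = v ∧
      (γ : Matrix n n R).map (Ideal.Quotient.mk I) =
        (transvection i k 1).map (Ideal.Quotient.mk I) := by
  refine ⟨⟨transvection i j (-v k) * transvection i k (v j), by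
    simp [det_transvection_of_ne _ _ hji.symm, det_transvection_of_ne _ _ hki.symm]⟩, ?_, ?_, ?_⟩
  · simp [transvection_mul_transvection_mulVec hji, hji, hki]
  · simp [transvection_mul_transvection_mulVec hji, mul_comm]
  · simp [Matrix.map_mul, map_transvection, hvj, hvk, transvection_zero]

theorem exists_fixing_congr_transvection (hji : j ≠ i) (hki : k ≠ i) (hkj : k ≠ j) (I : Ideal R)
    (M : Matrix n n R) (hM : ∀ a b, M a b - transvection j i 1 a b ∈ I) :
    ∃ γ : SpecialLinearGroup n R, (γ : Matrix n n R) *ᵥ Pi.single i 1 = Pi.single i 1 ∧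
      (γ : Matrix n n R) *ᵥ (M *ᵥ Pi.single i 1) = M *ᵥ Pi.single i 1 ∧
      ∀ a b, (γ : Matrix n n R) a b - transvection i k 1 a b ∈ I := by
  have hM' := congr_fun₂ (forall_sub_mem_iff_map_eq.1 hM)
  obtain ⟨γ, hγi, hγv, hγ⟩ := exists_fixing_single_congr_transvection hji hki I
    (M *ᵥ Pi.single i 1)
    (by simpa [map_transvection, transvection, hji] using hM' j i)
    (by simpa [map_transvection, transvection, hki, single_apply_of_row_ne hkj.symm] using hM' k i)
  exact ⟨γ, hγi, hγv, forall_sub_mem_iff_map_eq.2 hγ⟩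

end Matrix

/-- Lemma A.2: if `β ∈ SL_n(A)` is congruent to `e_{2,1}` modulo a maximal ideal `𝔮`, then
there is `γ ∈ SL_n(A)` fixing `e₁` and `β e₁` which is congruent to `e_{1,3}` mod `𝔮`. -/
theorem exists_fixing_congruent_e13 (n : ℕ) (hn : 3 ≤ n)
    (A : Type*) [CommRing A]
    (𝔮 : Ideal A)
    (β : Matrix.SpecialLinearGroup (Fin n) A)
    (hβ : ∀ i j, (β : Matrix (Fin n) (Fin n) A) i j
      - ((elemSL (⟨1, by omega⟩ : Fin n) (⟨0, by omega⟩ : Fin n) (by simp [Fin.ext_iff]) (1 : A) :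
          Matrix.SpecialLinearGroup (Fin n) A) : Matrix (Fin n) (Fin n) A) i j ∈ 𝔮) :
    ∃ γ : Matrix.SpecialLinearGroup (Fin n) A,
      (γ : Matrix (Fin n) (Fin n) A).mulVec (Pi.single (⟨0, by omega⟩ : Fin n) 1)
        = Pi.single (⟨0, by omega⟩ : Fin n) 1 ∧
      (γ : Matrix (Fin n) (Fin n) A).mulVec
          ((β : Matrix (Fin n) (Fin n) A).mulVec (Pi.single (⟨0, by omega⟩ : Fin n) 1))
        = (β : Matrix (Fin n) (Fin n) A).mulVec (Pi.single (⟨0, by omega⟩ : Fin n) 1) ∧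
      ∀ i j, (γ : Matrix (Fin n) (Fin n) A) i j
        - ((elemSL (⟨0, by omega⟩ : Fin n) (⟨2, by omega⟩ : Fin n) (by simp [Fin.ext_iff]) (1 : A) :
            Matrix.SpecialLinearGroup (Fin n) A) : Matrix (Fin n) (Fin n) A) i j ∈ 𝔮 := by
  refine Matrix.exists_fixing_congr_transvection (i := (⟨0, by omega⟩ : Fin n))
    (j := ⟨1, by omega⟩) (k := ⟨2, by omega⟩) ?_ ?_ ?_ 𝔮 β hβ <;> simp [Fin.ext_iff]
end

section
/- Let Φ be a reduced, irreducible, crystallographic root system spanning a finite-dimensional vector space V over an ordered field (e.g. ℚ), and let Δ be a base (simple system) of Φ with associated set Φ⁺ of positive roots; thus Δ is linearly independent and every r ∈ Φ⁺ can be written uniquely as r = Σ_{γ∈Δ} c_γ(r)·γ with all coefficients c_γ(r) non-negative integers. Then for every α ∈ Δ, the linear span of the set {r ∈ Φ⁺ : c_α(r) > 0} equals the linear span of Φ (i.e. all of V). -/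
/-!
Let `f` be the `α`-coordinate functional of the base and `U` the span of the roots on which `f`
does not vanish; since `Φ = Φ⁺ ∪ -Φ⁺`, these roots span the same space as the positive roots with
positive `α`-coefficient. If `r ∈ U` is a root and `s ∉ U` a root with `B r s ≠ 0`, then some root
`u` with `f u ≠ 0` has `B u s ≠ 0`, and the reflection `s - c • u` with `c ≠ 0` is a root on which
`f` does not vanish, forcing `s ∈ U`. So `Φ ∩ U` and `Φ \ U` are orthogonal, and irreducibility
(with `α ∈ Φ ∩ U`) gives `Φ ⊆ U`.
-/

open scoped Pointwise

open Submodule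

theorem LinearIndependent.exists_linearMap_apply_eq {K V ι : Type*} [Field K] [AddCommGroup V]
    [Module K V] {v : ι → V} (hv : LinearIndependent K v) (g : ι → K) :
    ∃ f : V →ₗ[K] K, ∀ i, f (v i) = g i := by
  obtain ⟨f, hf⟩ := LinearMap.exists_extend ((Module.Basis.span hv).constr K g)
  refine ⟨f, fun i => ?_⟩
  have := LinearMap.congr_fun hf (Module.Basis.span hv i)
  rwa [Module.Basis.constr_basis, LinearMap.comp_apply, Submodule.subtype_apply,
    Module.Basis.span_apply] at this

theorem LinearMap.apply_sum_smul_eq_of_apply_eq_single {K V : Type*} [DivisionRing K]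
    [AddCommGroup V] [Module K V] {f : V →ₗ[K] K} {s : Finset V} {α : V} (hα : α ∈ s)
    (hfα : f α = 1) (hf : ∀ γ ∈ s, γ ≠ α → f γ = 0) (c : V → K) :
    f (∑ γ ∈ s, c γ • γ) = c α := by
  rw [map_sum, Finset.sum_eq_single_of_mem α hα fun γ hγ hne => by simp [hf γ hγ hne]]
  simp [hfα]

theorem exists_mem_apply_ne_zero_of_mem_span {R M N : Type*} [Semiring R] [AddCommMonoid M]
    [Module R M] [AddCommMonoid N] [Module R N] {T : Set M} {g : M →ₗ[R] N} {x : M}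
    (hx : x ∈ span R T) (hgx : g x ≠ 0) : ∃ u ∈ T, g u ≠ 0 := by
  by_contra! h
  exact hgx (span_le (p := LinearMap.ker g) |>.2 h hx)

section Reflection

variable {K V : Type*} [Field K] [AddCommGroup V] [Module K V] {Φ : Set V} {f : V →ₗ[K] K}

theorem mem_span_apply_ne_zero_of_sub_smul_mem {r s : V} {c : K} (hs : s ∈ Φ)
    (hsr : s - c • r ∈ Φ) (hr : r ∈ Φ) (hfr : f r ≠ 0) (hc : c ≠ 0) :
    s ∈ span K {t ∈ Φ | f t ≠ 0} := by
  by_cases hfs : f s = 0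
  · have hfsr : f (s - c • r) ≠ 0 := by simp [hfs, hc, hfr]
    rw [← sub_add_cancel s (c • r)]
    exact add_mem (subset_span ⟨hsr, hfsr⟩) (smul_mem _ c (subset_span ⟨hr, hfr⟩))
  · exact subset_span ⟨hs, hfs⟩

theorem subset_span_apply_ne_zero_of_irreducible [CharZero K] (B : V →ₗ[K] V →ₗ[K] K)
    (hB : ∀ r ∈ Φ, B r r ≠ 0)
    (hrefl : ∀ r ∈ Φ, ∀ t ∈ Φ, t - (2 * B r t / B r r) • r ∈ Φ)
    (hirr : ∀ Φ₁ Φ₂ : Set V, Φ₁ ∪ Φ₂ = Φ → Φ₁ ∩ Φ₂ = ∅ →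
      (∀ r ∈ Φ₁, ∀ s ∈ Φ₂, B r s = 0) → Φ₁ = ∅ ∨ Φ₂ = ∅)
    {α : V} (hα : α ∈ Φ) (hfα : f α ≠ 0) : Φ ⊆ span K {t ∈ Φ | f t ≠ 0} := by
  set U := span K {t ∈ Φ | f t ≠ 0}
  have horth : ∀ r ∈ Φ ∩ U, ∀ s ∈ Φ \ U, B r s = 0 := by
    rintro r ⟨-, hrU⟩ s ⟨hs, hsU⟩
    by_contra hrs
    obtain ⟨u, ⟨hu, hfu⟩, hus⟩ := exists_mem_apply_ne_zero_of_mem_span (g := B.flip s) hrU hrs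
    exact hsU <| mem_span_apply_ne_zero_of_sub_smul_mem hs (hrefl u hu s hs) hu hfu <|
      div_ne_zero (mul_ne_zero two_ne_zero hus) (hB u hu)
  rcases hirr _ _ (Set.inter_union_sdiff Φ U)
      (Set.disjoint_iff_inter_eq_empty.1 Set.disjoint_sdiff_inter.symm) horth with h | h
  · exact absurd h (Set.nonempty_iff_ne_empty.1 ⟨α, hα, subset_span ⟨hα, hfα⟩⟩)
  · exact Set.sdiff_eq_empty.1 h

end Reflection

theorem span_positive_roots_with_coeff_pos_general
    (V : Type*) [AddCommGroup V] [Module ℚ V]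
    (B : V →ₗ[ℚ] V →ₗ[ℚ] ℚ)
    (Φ : Set V) (hΦfin : Φ.Finite)
    (hBpos : ∀ r ∈ Φ, 0 < B r r)
    -- closed under reflections
    (hrefl : ∀ r ∈ Φ, ∀ t ∈ Φ, t - (2 * B r t / B r r) • r ∈ Φ)
    -- irreducible
    (hirr : ∀ Φ₁ Φ₂ : Set V, Φ₁ ∪ Φ₂ = Φ → Φ₁ ∩ Φ₂ = ∅ →
      (∀ r ∈ Φ₁, ∀ s ∈ Φ₂, B r s = 0) → Φ₁ = ∅ ∨ Φ₂ = ∅)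
    -- base and positive system
    (Δ Φpos : Set V) (hΔΦ : Δ ⊆ Φ) (hpossub : Φpos ⊆ Φ)
    (hdecomp : Φ = Φpos ∪ -Φpos)
    (hli : LinearIndependent ℚ (fun x : Δ => (x : V)))
    (coeff : V → V → ℤ)
    (hcoeff : ∀ r ∈ Φpos,
      r = ∑ γ ∈ (hΦfin.subset hΔΦ).toFinset, ((coeff r γ : ℚ) • γ) ∧
      ∀ γ ∈ Δ, 0 ≤ coeff r γ) :
    ∀ α ∈ Δ, Submodule.span ℚ {r : V | r ∈ Φpos ∧ 0 < coeff r α} = Submodule.span ℚ Φ := by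
  intro α hα
  classical
  obtain ⟨f, hf⟩ := hli.exists_linearMap_apply_eq fun γ => if (γ : V) = α then 1 else 0
  have hfα : f α = 1 := by simpa using hf ⟨α, hα⟩
  have hmem : ∀ γ, γ ∈ (hΦfin.subset hΔΦ).toFinset ↔ γ ∈ Δ := fun _ => Set.Finite.mem_toFinset _
  have hfpos : ∀ r ∈ Φpos, f r = coeff r α := fun r hr =>
    (congrArg f (hcoeff r hr).1).trans <|
      LinearMap.apply_sum_smul_eq_of_apply_eq_single ((hmem α).2 hα) hfα
        (fun γ hγ hne => by simpa [hne] using hf ⟨γ, (hmem γ).1 hγ⟩) _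
  have hpos : ∀ r ∈ Φpos, f r ≠ 0 → 0 < coeff r α := fun r hr hfr =>
    ((hcoeff r hr).2 α hα).lt_of_ne' fun h => hfr (by simp [hfpos r hr, h])
  have hspan : {t ∈ Φ | f t ≠ 0} ⊆ span ℚ {r | r ∈ Φpos ∧ 0 < coeff r α} := by
    rintro r ⟨hr, hfr⟩
    rcases hdecomp ▸ hr with hr | hr
    · exact subset_span ⟨hr, hpos r hr hfr⟩
    · rw [← neg_neg r]
      exact neg_mem (subset_span ⟨hr, hpos (-r) hr (by simpa using hfr)⟩)
  refine le_antisymm (span_mono fun r hr => hpossub hr.1) (span_le.2 ?_)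
  exact (subset_span_apply_ne_zero_of_irreducible B (fun r hr => (hBpos r hr).ne') hrefl hirr
    (hΔΦ hα) (hfα ▸ one_ne_zero)).trans (span_le.2 hspan)

/-- Lemma 4.1: let `Φ` be a reduced, irreducible, crystallographic root system spanning a
finite-dimensional `ℚ`-vector space `V`, with base `Δ` and positive system `Φ⁺`, where each
positive root `r` is the non-negative integral combination `∑_{γ ∈ Δ} coeff r γ • γ`.
Then for every `α ∈ Δ`, the span of `{r ∈ Φ⁺ : coeff r α > 0}` equals the span of `Φ`. -/
theorem span_positive_roots_with_coeff_pos
    (V : Type*) [AddCommGroup V] [Module ℚ V] [FiniteDimensional ℚ V]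
    (B : V →ₗ[ℚ] V →ₗ[ℚ] ℚ) (hBsymm : ∀ u v : V, B u v = B v u)
    (Φ : Set V) (hΦfin : Φ.Finite) (hΦ0 : (0 : V) ∉ Φ)
    (hΦspan : Submodule.span ℚ Φ = ⊤)
    (hBpos : ∀ r ∈ Φ, 0 < B r r)
    -- crystallographic
    (hcrys : ∀ r ∈ Φ, ∀ s ∈ Φ, ∃ k : ℤ, 2 * B r s = (k : ℚ) * B r r)
    -- reduced
    (hred : ∀ r ∈ Φ, ∀ c : ℚ, c • r ∈ Φ → c = 1 ∨ c = -1)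
    -- closed under reflections
    (hrefl : ∀ r ∈ Φ, ∀ t ∈ Φ, t - (2 * B r t / B r r) • r ∈ Φ)
    -- irreducible
    (hirr : ∀ Φ₁ Φ₂ : Set V, Φ₁ ∪ Φ₂ = Φ → Φ₁ ∩ Φ₂ = ∅ →
      (∀ r ∈ Φ₁, ∀ s ∈ Φ₂, B r s = 0) → Φ₁ = ∅ ∨ Φ₂ = ∅)
    -- base and positive system
    (Δ Φpos : Set V) (hΔΦ : Δ ⊆ Φ) (hΔpos : Δ ⊆ Φpos) (hpossub : Φpos ⊆ Φ)
    (hdecomp : Φ = Φpos ∪ -Φpos) (hdisj : Φpos ∩ -Φpos = ∅)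
    (hli : LinearIndependent ℚ (fun x : Δ => (x : V)))
    (coeff : V → V → ℤ)
    (hcoeff : ∀ r ∈ Φpos,
      r = ∑ γ ∈ (hΦfin.subset hΔΦ).toFinset, ((coeff r γ : ℚ) • γ) ∧
      ∀ γ ∈ Δ, 0 ≤ coeff r γ) :
    ∀ α ∈ Δ, Submodule.span ℚ {r : V | r ∈ Φpos ∧ 0 < coeff r α} = Submodule.span ℚ Φ :=
  span_positive_roots_with_coeff_pos_general V B Φ hΦfin hBpos hrefl hirr Δ Φpos hΔΦ hpossub hdecomp
    hli coeff hcoeff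
end

section
/- Let X, Y, Z be smooth finite-dimensional real manifolds without boundary and let f : X × Y → Z be a continuously differentiable (C¹) map. For y ∈ Y write f_y : X → Z for the map x ↦ f(x, y). Suppose (x₀, y₀) ∈ X × Y is a point such that the differential of f_{y₀} at x₀ is a surjective linear map from the tangent space T_{x₀}X to the tangent space T_{f(x₀,y₀)}Z. Then there exist open sets U ⊆ Y and V ⊆ Z with y₀ ∈ U and f(x₀, y₀) ∈ V such that V ⊆ f_y(X) for every y ∈ U. -/
/-!
The map `g (x, y) = (f (x, y), y)` has surjective differential at `(x₀, y₀)`, since its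
differential is `(u, v) ↦ (D f (u, v), v)` and `D f` is already onto along `T_{x₀} X`. By the
open mapping form of the inverse function theorem, read in charts, `g` maps neighbourhoods of
`(x₀, y₀)` onto neighbourhoods of `(f (x₀, y₀), y₀)`; a product neighbourhood `V × U` inside the
range of `g` is what we want.
-/

open scoped Manifold
open Topology Filter Set

theorem ContinuousLinearMap.surjective_prod_snd_of_surjective_comp_inl
    {R : Type*} [Semiring R] {M N P : Type*}
    [TopologicalSpace M] [AddCommMonoid M] [Module R M]
    [TopologicalSpace N] [AddCommMonoid N] [Module R N]
    [TopologicalSpace P] [AddCommGroup P] [Module R P]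
    (D : M × N →L[R] P) (h : Function.Surjective (D.comp (inl R M N))) :
    Function.Surjective (D.prod (snd R M N)) := by
  rintro ⟨w, v⟩
  obtain ⟨u, hu⟩ := h (w - D (0, v))
  refine ⟨(u, v), Prod.ext ?_ rfl⟩
  calc D (u, v) = D (u, 0) + D (0, v) := by rw [← map_add, Prod.mk_add_mk, add_zero, zero_add]
    _ = w := by rw [show D (u, 0) = w - D (0, v) from hu, sub_add_cancel]

theorem exists_open_forall_subset_range_of_range_mem_nhds {X Y Z : Type*}
    [TopologicalSpace Y] [TopologicalSpace Z] {f : X × Y → Z} {z : Z} {y₀ : Y}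
    (h : range (fun p => (f p, p.2)) ∈ 𝓝 (z, y₀)) :
    ∃ U : Set Y, ∃ V : Set Z, IsOpen U ∧ IsOpen V ∧ y₀ ∈ U ∧ z ∈ V ∧
      ∀ y ∈ U, V ⊆ range (fun x => f (x, y)) := by
  obtain ⟨V, U, hV, hzV, hU, hyU, hVU⟩ := mem_nhds_prod_iff'.1 h
  refine ⟨U, V, hU, hV, hyU, hzV, fun y hy z' hz' => ?_⟩
  obtain ⟨⟨x, y'⟩, hxy⟩ := hVU (mk_mem_prod hz' hy)
  obtain ⟨rfl, rfl⟩ := Prod.mk.inj hxy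
  exact ⟨x, rfl⟩

section Derivatives

variable {𝕜 : Type*} [NontriviallyNormedField 𝕜]
  {E : Type*} [NormedAddCommGroup E] [NormedSpace 𝕜 E]
  {H : Type*} [TopologicalSpace H] {I : ModelWithCorners 𝕜 E H}
  {M : Type*} [TopologicalSpace M] [ChartedSpace H M]
  {E' : Type*} [NormedAddCommGroup E'] [NormedSpace 𝕜 E']
  {H' : Type*} [TopologicalSpace H'] {I' : ModelWithCorners 𝕜 E' H'}
  {M' : Type*} [TopologicalSpace M'] [ChartedSpace H' M']
  {F : Type*} [NormedAddCommGroup F] [NormedSpace 𝕜 F]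
  {G : Type*} [TopologicalSpace G] {J : ModelWithCorners 𝕜 F G}
  {N : Type*} [TopologicalSpace N] [ChartedSpace G N]

theorem mfderiv_comp_prodMk_right {f : M × M' → N} {x : M} {y : M'}
    (hf : MDifferentiableAt (I.prod I') J f (x, y)) :
    mfderiv I J (fun x => f (x, y)) x =
      (mfderiv (I.prod I') J f (x, y)).comp (ContinuousLinearMap.inl 𝕜 E E') := by
  have hl : MDifferentiableAt I (I.prod I') (fun x : M => (x, y)) x :=
    mdifferentiableAt_id.prodMk mdifferentiableAt_const
  rw [show (fun x => f (x, y)) = f ∘ (fun x : M => (x, y)) from rfl, mfderiv_comp x hf hl,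
    mfderiv_prod_left]
  rfl

theorem mfderiv_prodMk_snd {f : M × M' → N} {p : M × M'}
    (hf : MDifferentiableAt (I.prod I') J f p) :
    mfderiv (I.prod I') (J.prod I') (fun p => (f p, p.2)) p =
      (mfderiv (I.prod I') J f p).prod (ContinuousLinearMap.snd 𝕜 E E') := by
  rw [mfderiv_prodMk hf mdifferentiableAt_snd, mfderiv_snd]
  rfl

end Derivatives

section OpenMapping

variable {𝕜 : Type*} [RCLike 𝕜]
  {E : Type*} [NormedAddCommGroup E] [NormedSpace 𝕜 E]
  {H : Type*} [TopologicalSpace H] {I : ModelWithCorners 𝕜 E H} [I.Boundaryless]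
  {M : Type*} [TopologicalSpace M] [ChartedSpace H M]
  {E' : Type*} [NormedAddCommGroup E'] [NormedSpace 𝕜 E']
  {H' : Type*} [TopologicalSpace H'] {I' : ModelWithCorners 𝕜 E' H'} [I'.Boundaryless]
  {M' : Type*} [TopologicalSpace M'] [ChartedSpace H' M']

theorem map_extChartAt_symm_nhds_of_boundaryless (p : M) :
    map (extChartAt I p).symm (𝓝 (extChartAt I p p)) = 𝓝 p := by
  rw [← map_extChartAt_symm_nhdsWithin_range (I := I) p, I.range_eq_univ, nhdsWithin_univ]

variable [CompleteSpace E] [CompleteSpace E']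

theorem ContMDiffAt.map_nhds_eq_of_surjective_mfderiv {g : M → M'} {p : M}
    (hg : ContMDiffAt I I' 1 g p) (hsurj : Function.Surjective (mfderiv I I' g p)) :
    map g (𝓝 p) = 𝓝 (g p) := by
  set G := writtenInExtChartAt I I' p g
  set c := extChartAt I p p
  have hG : ContDiffAt 𝕜 1 G c := by
    have := (contMDiffAt_iff.1 hg).2
    rwa [I.range_eq_univ, contDiffWithinAt_univ] at this
  have hDG : mfderiv I I' g p = fderiv 𝕜 G c := by
    rw [(hg.mdifferentiableAt one_ne_zero).mfderiv, I.range_eq_univ, fderivWithin_univ]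
  have hGmap : map G (𝓝 c) = 𝓝 (extChartAt I' (g p) (g p)) := by
    rw [(hG.hasStrictFDerivAt one_ne_zero).map_nhds_eq_of_surj
      (LinearMap.range_eq_top.2 (hDG ▸ hsurj))]
    simp [G, c, writtenInExtChartAt]
  have hsymm := map_extChartAt_symm_nhds_of_boundaryless (I := I) p
  have hGeq : g ∘ (extChartAt I p).symm =ᶠ[𝓝 c] (extChartAt I' (g p)).symm ∘ G := by
    have hsrc : g ⁻¹' (extChartAt I' (g p)).source ∈ 𝓝 p :=
      hg.continuousAt.preimage_mem_nhds (extChartAt_source_mem_nhds (g p))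
    filter_upwards [hsymm.le hsrc] with x hx
    exact ((extChartAt I' (g p)).left_inv hx).symm
  rw [← hsymm, map_map, map_congr hGeq, ← map_map, hGmap,
    map_extChartAt_symm_nhds_of_boundaryless]

end OpenMapping

theorem exists_open_uniformly_surjective_general
    {EX : Type*} [NormedAddCommGroup EX] [NormedSpace ℝ EX] [FiniteDimensional ℝ EX]
    {EY : Type*} [NormedAddCommGroup EY] [NormedSpace ℝ EY] [FiniteDimensional ℝ EY]
    {EZ : Type*} [NormedAddCommGroup EZ] [NormedSpace ℝ EZ] [FiniteDimensional ℝ EZ]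
    (X : Type*) [TopologicalSpace X] [ChartedSpace EX X]
    (Y : Type*) [TopologicalSpace Y] [ChartedSpace EY Y]
    (Z : Type*) [TopologicalSpace Z] [ChartedSpace EZ Z]
    (f : X × Y → Z)
    (hf : ContMDiff ((𝓘(ℝ, EX)).prod (𝓘(ℝ, EY))) (𝓘(ℝ, EZ)) 1 f)
    (x₀ : X) (y₀ : Y)
    (hsurj : Function.Surjective
      (mfderiv (𝓘(ℝ, EX)) (𝓘(ℝ, EZ)) (fun x => f (x, y₀)) x₀)) :
    ∃ U : Set Y, ∃ V : Set Z, IsOpen U ∧ IsOpen V ∧ y₀ ∈ U ∧ f (x₀, y₀) ∈ V ∧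
      ∀ y ∈ U, V ⊆ Set.range (fun x => f (x, y)) := by
  have hfd : MDifferentiableAt ((𝓘(ℝ, EX)).prod (𝓘(ℝ, EY))) (𝓘(ℝ, EZ)) f (x₀, y₀) :=
    (hf _).mdifferentiableAt one_ne_zero
  have hg : ContMDiff ((𝓘(ℝ, EX)).prod (𝓘(ℝ, EY))) ((𝓘(ℝ, EZ)).prod (𝓘(ℝ, EY))) 1
      (fun p => (f p, p.2)) :=
    hf.prodMk contMDiff_snd
  have hDg : Function.Surjective (mfderiv ((𝓘(ℝ, EX)).prod (𝓘(ℝ, EY)))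
      ((𝓘(ℝ, EZ)).prod (𝓘(ℝ, EY))) (fun p => (f p, p.2)) (x₀, y₀)) := by
    rw [mfderiv_comp_prodMk_right hfd] at hsurj
    rw [mfderiv_prodMk_snd hfd]
    exact ContinuousLinearMap.surjective_prod_snd_of_surjective_comp_inl _ hsurj
  apply exists_open_forall_subset_range_of_range_mem_nhds
  rw [← (hg _).map_nhds_eq_of_surjective_mfderiv hDg]
  exact range_mem_map

/-- Lemma 3.5 (real case): let `f : X × Y → Z` be a `C¹` map of smooth real manifolds without
boundary, and suppose the differential at `x₀` of `f_{y₀} = f(·, y₀)` is surjective. Then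
there are open sets `U ∋ y₀` and `V ∋ f(x₀, y₀)` with `V ⊆ f_y(X)` for every `y ∈ U`. -/
theorem exists_open_uniformly_surjective
    {EX : Type*} [NormedAddCommGroup EX] [NormedSpace ℝ EX] [FiniteDimensional ℝ EX]
    {EY : Type*} [NormedAddCommGroup EY] [NormedSpace ℝ EY] [FiniteDimensional ℝ EY]
    {EZ : Type*} [NormedAddCommGroup EZ] [NormedSpace ℝ EZ] [FiniteDimensional ℝ EZ]
    (X : Type*) [TopologicalSpace X] [ChartedSpace EX X]
    [IsManifold (𝓘(ℝ, EX)) (⊤ : ℕ∞) X]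
    (Y : Type*) [TopologicalSpace Y] [ChartedSpace EY Y]
    [IsManifold (𝓘(ℝ, EY)) (⊤ : ℕ∞) Y]
    (Z : Type*) [TopologicalSpace Z] [ChartedSpace EZ Z]
    [IsManifold (𝓘(ℝ, EZ)) (⊤ : ℕ∞) Z]
    (f : X × Y → Z)
    (hf : ContMDiff ((𝓘(ℝ, EX)).prod (𝓘(ℝ, EY))) (𝓘(ℝ, EZ)) 1 f)
    (x₀ : X) (y₀ : Y)
    (hsurj : Function.Surjective
      (mfderiv (𝓘(ℝ, EX)) (𝓘(ℝ, EZ)) (fun x => f (x, y₀)) x₀)) :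
    ∃ U : Set Y, ∃ V : Set Z, IsOpen U ∧ IsOpen V ∧ y₀ ∈ U ∧ f (x₀, y₀) ∈ V ∧
      ∀ y ∈ U, V ⊆ Set.range (fun x => f (x, y)) :=
  exists_open_uniformly_surjective_general X Y Z f hf x₀ y₀ hsurj
end

section
/- Let Δ be a finitely generated group, let d ≥ 1 be an integer, and let w(Δ) := {x^d[y,z] : x, y, z ∈ Δ} be the set of values of the word w = x^d[y,z] in Δ. Assume that w has infinite width in Δ: for every natural number N there is an element of the subgroup ⟨w(Δ)⟩ generated by w(Δ) that is not a product of N elements of w(Δ) ∪ w(Δ)⁻¹. Let U be a non-principal ultrafilter on ℕ and let Δ' = Δ^ℕ/U be the corresponding ultrapower of Δ. Then the subgroup of Δ' generated by the set of values {x^d[y,z] : x, y, z ∈ Δ'} has infinite index in Δ'. -/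
open scoped Pointwise

/-- If the word `w = x^d[y,z]` has infinite width in a finitely generated group `Δ`, then in
any ultrapower `Δ' = Δ^ℕ/U` by a non-principal ultrafilter `U`, the subgroup generated by the
set of `w`-values has infinite index. -/
theorem ultrapower_word_values_infinite_index
    (Δ : Type*) [Group Δ] (hfg : Group.FG Δ) (d : ℕ) (hd : 1 ≤ d)
    (hwidth : ∀ N : ℕ, ∃ g ∈ Subgroup.closure
        {g : Δ | ∃ x y z : Δ, g = x ^ d * (y⁻¹ * z⁻¹ * y * z)},
      g ∉ ({g : Δ | ∃ x y z : Δ, g = x ^ d * (y⁻¹ * z⁻¹ * y * z)} ∪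
        {g : Δ | ∃ x y z : Δ, g = x ^ d * (y⁻¹ * z⁻¹ * y * z)}⁻¹) ^ N)
    (U : Ultrafilter ℕ) (hU : ∀ a : ℕ, U ≠ pure a) :
    (Subgroup.closure {g : Filter.Germ (U : Filter ℕ) Δ |
      ∃ x y z : Filter.Germ (U : Filter ℕ) Δ, g = x ^ d * (y⁻¹ * z⁻¹ * y * z)}).index = 0 := by
  classical
  set T : Set Δ := {g : Δ | ∃ x y z : Δ, g = x ^ d * (y⁻¹ * z⁻¹ * y * z)} with hT
  set S : Set Δ := T ∪ T⁻¹ with hS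
  have hone : (1 : Δ) ∈ S := by
    left
    exact ⟨1, 1, 1, by simp⟩
  have hSinv : S⁻¹ = S := by
    rw [hS, Set.union_inv, inv_inv, Set.union_comm]
  have hSninv : ∀ n : ℕ, (S ^ n)⁻¹ = S ^ n := by
    intro n
    rw [← inv_pow, hSinv]
  -- widths are finite on the closure
  have hfin : ∀ g ∈ Subgroup.closure T, ∃ N : ℕ, g ∈ S ^ N := by
    have : Subgroup.closure T ≤
        { carrier := {g : Δ | ∃ N : ℕ, g ∈ S ^ N}
          one_mem' := ⟨0, by simp⟩
          mul_mem' := by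
            rintro a b ⟨M, hM⟩ ⟨N, hN⟩
            exact ⟨M + N, by rw [pow_add]; exact Set.mul_mem_mul hM hN⟩
          inv_mem' := by
            rintro a ⟨M, hM⟩
            exact ⟨M, by rw [← hSninv M]; exact Set.inv_mem_inv.2 hM⟩ } := by
      apply Subgroup.closure_le _ |>.2
      intro g hg
      exact ⟨1, by rw [pow_one]; exact Or.inl hg⟩
    exact fun g hg => this hg
  -- choose elements of large width
  have hex : ∀ N : ℕ, ∃ g : Δ, (∃ M : ℕ, g ∈ S ^ M) ∧ g ∉ S ^ N := by
    intro N
    obtain ⟨g, hg1, hg2⟩ := hwidth N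
    exact ⟨g, hfin g hg1, hg2⟩
  choose v hv1 hv2 using hex
  choose b hb using hv1
  -- recursive construction: for each n, a sequence of elements with widths separated by > n
  set E : ℕ → ℕ → Δ × ℕ := fun n => fun j => Nat.rec ((1 : Δ), 0)
    (fun _ p => (v (p.2 + n), max (b (p.2 + n)) p.2)) j with hE
  have hE0 : ∀ n, E n 0 = ((1 : Δ), 0) := fun n => rfl
  have hEs : ∀ n j, E n (j + 1) = (v ((E n j).2 + n), max (b ((E n j).2 + n)) (E n j).2) :=
    fun n j => rfl
  have hmem : ∀ n j, (E n j).1 ∈ S ^ (E n j).2 := by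
    intro n j
    induction j with
    | zero => simp [hE0]
    | succ j _ =>
      rw [hEs]
      exact Set.pow_subset_pow_right hone (le_max_left _ _) (hb _)
  have hmono : ∀ n i j, i ≤ j → (E n i).2 ≤ (E n j).2 := by
    intro n i j hij
    induction j with
    | zero => simp [Nat.le_zero.1 hij, hE0]
    | succ j ih =>
      rcases Nat.lt_or_ge i (j + 1) with h | h
      · exact (ih (Nat.lt_succ_iff.1 h)).trans (by rw [hEs]; exact le_max_right _ _)
      · have : i = j + 1 := le_antisymm hij h
        simp [this]
  have hsep : ∀ n i j, i < j → ((E n i).1)⁻¹ * (E n j).1 ∉ S ^ n := by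
    intro n i j hij hmemn
    obtain ⟨k, rfl⟩ : ∃ k, j = k + 1 := ⟨j - 1, by omega⟩
    have hik : i ≤ k := Nat.lt_succ_iff.1 hij
    have h1 : (E n (k + 1)).1 ∉ S ^ ((E n k).2 + n) := by
      rw [hEs]; exact hv2 _
    apply h1
    have : (E n (k + 1)).1 = (E n i).1 * (((E n i).1)⁻¹ * (E n (k + 1)).1) := by group
    rw [this, pow_add]
    refine Set.mul_mem_mul ?_ hmemn
    exact Set.pow_subset_pow_right hone (hmono n i k hik) (hmem n i)
  -- the subgroup of bounded-width germs
  set G := Filter.Germ (U : Filter ℕ) Δ with hG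
  set P : Subgroup G :=
    { carrier := {h : G | ∃ (N : ℕ) (f : ℕ → Δ), (∀ n, f n ∈ S ^ N) ∧ h = ↑f}
      one_mem' := ⟨0, 1, fun n => by simp [Pi.one_apply], rfl⟩
      mul_mem' := by
        rintro a b ⟨M, f, hf, rfl⟩ ⟨N, g, hg, rfl⟩
        refine ⟨M + N, f * g, fun n => ?_, (Filter.Germ.coe_mul f g).symm⟩
        rw [pow_add]
        exact Set.mul_mem_mul (hf n) (hg n)
      inv_mem' := by
        rintro a ⟨M, f, hf, rfl⟩
        refine ⟨M, f⁻¹, fun n => ?_, (Filter.Germ.coe_inv f).symm⟩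
        rw [← hSninv M]
        exact Set.inv_mem_inv.2 (hf n) } with hP
  have hHP : Subgroup.closure {g : G | ∃ x y z : G, g = x ^ d * (y⁻¹ * z⁻¹ * y * z)} ≤ P := by
    apply Subgroup.closure_le _ |>.2
    rintro g ⟨x, y, z, rfl⟩
    refine Filter.Germ.inductionOn₃ x y z (fun f g k => ?_)
    refine ⟨1, fun n => f n ^ d * ((g n)⁻¹ * (k n)⁻¹ * g n * k n), fun n => ?_, ?_⟩
    · rw [pow_one]; exact Or.inl ⟨f n, g n, k n, rfl⟩
    · show (↑f : G) ^ d * ((↑g)⁻¹ * (↑k)⁻¹ * ↑g * ↑k) = _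
      rw [← Filter.Germ.coe_pow, ← Filter.Germ.coe_inv, ← Filter.Germ.coe_inv,
        ← Filter.Germ.coe_mul, ← Filter.Germ.coe_mul, ← Filter.Germ.coe_mul,
        ← Filter.Germ.coe_mul]
      rfl
  -- distinct cosets
  set h : ℕ → G := fun j => ↑(fun n => (E n j).1) with hh
  have hdist : ∀ i j, i < j → (h i)⁻¹ * h j ∉ P := by
    rintro i j hij ⟨N, f, hf, heq⟩
    have hcoe : (h i)⁻¹ * h j = ↑(fun n => ((E n i).1)⁻¹ * (E n j).1) := by
      rw [hh]
      rw [← Filter.Germ.coe_inv]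
      rw [← Filter.Germ.coe_mul]
      rfl
    rw [hcoe] at heq
    have hev : {n : ℕ | ((E n i).1)⁻¹ * (E n j).1 = f n} ∈ U :=
      Filter.Germ.coe_eq.1 heq
    have hsub : {n : ℕ | ((E n i).1)⁻¹ * (E n j).1 = f n} ⊆ {n : ℕ | n < N} := by
      intro n hn
      by_contra hnN
      have hNn : N ≤ n := Nat.le_of_not_lt hnN
      apply hsep n i j hij
      apply Set.pow_subset_pow_right hone hNn
      rw [Set.mem_setOf_eq] at hn
      rw [hn]
      exact hf n
    have hfinmem : {n : ℕ | n < N} ∈ U := Filter.mem_of_superset hev hsub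
    obtain ⟨a, _, ha⟩ := Ultrafilter.eq_pure_of_finite_mem (Set.finite_Iio N) hfinmem
    exact hU a ha
  -- conclude
  rw [Subgroup.index]
  have : Function.Injective (fun j : ℕ =>
      (QuotientGroup.mk (h j) : G ⧸ Subgroup.closure
        {g : G | ∃ x y z : G, g = x ^ d * (y⁻¹ * z⁻¹ * y * z)})) := by
    intro i j hij
    by_contra hne
    rcases Nat.lt_or_ge i j with hlt | hge
    · exact hdist i j hlt (hHP (QuotientGroup.eq.1 hij))
    · have hlt : j < i := lt_of_le_of_ne hge (Ne.symm hne)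
      exact hdist j i hlt (hHP (QuotientGroup.eq.1 hij.symm))
  have : Infinite (G ⧸ Subgroup.closure
      {g : G | ∃ x y z : G, g = x ^ d * (y⁻¹ * z⁻¹ * y * z)}) :=
    Infinite.of_injective _ this
  exact Nat.card_eq_zero_of_infinite
end
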